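/- arXiv:0803.0566 — 4 statements merged into one kernel-verified Lean document; each statement's English description precedes it below -/
import Mathlib

section
/- Let q : ℝ → ℝ be measurable with ∫₀^π q(t)² dt < ∞, let h, H, H₁, H₂ ∈ ℝ and set ρ := H·H₁ − H₂. Let λ, λₙ ∈ ℝ and kₙ ∈ ℝ with kₙ ≠ 0. Suppose ψ is a solution of −y'' + q y = λ y on [0,π] with ψ(π) = −λ + H₁ and ψ'(π) = λ·H − H₂, and φₙ is a solution of −y'' + q y = λₙ y on [0,π] with φₙ(0) = 1, φₙ'(0) = h, kₙ·φₙ(π) = −λₙ + H₁ and kₙ·φₙ'(π) = λₙ·H − H₂. Then ψ'(0) − h·ψ(0) = (λ − λₙ)·( ∫₀^π ψ(x)·φₙ(x) dx + ρ/kₙ ). -/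
open Real MeasureTheory Set intervalIntegral

/-- `y` (with derivative `y'`) is a solution of `-y'' + q y = λ y` on `[0, π]`
in the Carathéodory sense. -/
def IsSol (q : ℝ → ℝ) (lam : ℝ) (y y' : ℝ → ℝ) : Prop :=
  ContinuousOn y' (Set.Icc 0 π) ∧
  (∀ x ∈ Set.Icc (0:ℝ) π, HasDerivAt y (y' x) x) ∧
  ∀ x ∈ Set.Icc (0:ℝ) π, y' x = y' 0 + ∫ t in (0:ℝ)..x, (q t - lam) * y t

/-!
The Wronskian `W = ψ φ' - φ ψ'` of two Carathéodory solutions is absolutely continuous, since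
`ψ, φ, ψ', φ'` are indefinite integrals of integrable functions, and `W' = (λ - λₙ) ψ φ` almost
everywhere. Hence `W π - W 0 = (λ - λₙ) ∫₀^π ψ φ`, while the boundary conditions give
`W 0 = h ψ 0 - ψ' 0` and `kₙ W π = -(λ - λₙ) ρ`.
-/

theorem AbsolutelyContinuousOnInterval.congr {X : Type*} [PseudoMetricSpace X] {f g : ℝ → X}
    {a b : ℝ} (hf : AbsolutelyContinuousOnInterval f a b) (hfg : EqOn f g (uIcc a b)) :
    AbsolutelyContinuousOnInterval g a b := by
  rw [absolutelyContinuousOnInterval_iff] at hf ⊢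
  intro ε hε
  obtain ⟨δ, hδ, hfδ⟩ := hf ε hε
  refine ⟨δ, hδ, fun E hE hlen => ?_⟩
  convert hfδ E hE hlen using 2 with i hi
  rw [hfg (hE.1 i hi).1, hfg (hE.1 i hi).2]

section IndefiniteIntegral

variable {a b : ℝ} {v g : ℝ → ℝ}

theorem absolutelyContinuousOnInterval_of_eqOn_integral (hab : a ≤ b)
    (hg : IntervalIntegrable g volume a b)
    (hv : ∀ x ∈ Icc a b, v x = v a + ∫ t in a..x, g t) :
    AbsolutelyContinuousOnInterval v a b := by
  have hconst : AbsolutelyContinuousOnInterval (fun _ : ℝ => v a) a b :=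
    (LipschitzWith.const (v a)).lipschitzOnWith.absolutelyContinuousOnInterval
  refine (hconst.add (hg.absolutelyContinuousOnInterval_intervalIntegral left_mem_uIcc)).congr
    fun x hx => ?_
  rw [uIcc_of_le hab] at hx
  exact (hv x hx).symm

theorem ae_hasDerivAt_of_eqOn_integral (hab : a ≤ b) (hg : IntervalIntegrable g volume a b)
    (hv : ∀ x ∈ Icc a b, v x = v a + ∫ t in a..x, g t) :
    ∀ᵐ x, x ∈ Ioo a b → HasDerivAt v (g x) x := by
  filter_upwards [hg.ae_hasDerivAt_integral] with x hx hxab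
  have hx_mem : x ∈ uIcc a b := by rw [uIcc_of_le hab]; exact Ioo_subset_Icc_self hxab
  refine ((hx hx_mem a left_mem_uIcc).const_add (v a)).congr_of_eventuallyEq ?_
  filter_upwards [Ioo_mem_nhds hxab.1 hxab.2] with y hy
  exact hv y (Ioo_subset_Icc_self hy)

end IndefiniteIntegral

namespace IsSol

variable {q : ℝ → ℝ} {lam : ℝ} {y y' : ℝ → ℝ}

theorem continuousOn (hy : IsSol q lam y y') : ContinuousOn y (Icc 0 π) :=
  fun x hx => (hy.2.1 x hx).continuousAt.continuousWithinAt

theorem eq_add_integral (hy : IsSol q lam y y') :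
    ∀ x ∈ Icc 0 π, y x = y 0 + ∫ t in (0:ℝ)..x, y' t := by
  intro x hx
  have hsub : uIcc 0 x ⊆ Icc 0 π := by
    rw [uIcc_of_le hx.1]; exact Icc_subset_Icc le_rfl hx.2
  rw [integral_eq_sub_of_hasDerivAt (fun t ht => hy.2.1 t (hsub ht))
    ((hy.1.mono hsub).intervalIntegrable)]
  ring

theorem intervalIntegrable_potential_mul (hq : IntegrableOn q (Icc 0 π))
    (hy : IsSol q lam y y') :
    IntervalIntegrable (fun t => (q t - lam) * y t) volume 0 π := by
  rw [intervalIntegrable_iff_integrableOn_Icc_of_le pi_pos.le]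
  exact (hq.sub (integrableOn_const measure_Icc_lt_top.ne)).mul_continuousOn hy.continuousOn
    isCompact_Icc

theorem absolutelyContinuousOnInterval (hy : IsSol q lam y y') :
    AbsolutelyContinuousOnInterval y 0 π :=
  absolutelyContinuousOnInterval_of_eqOn_integral pi_pos.le
    (hy.1.intervalIntegrable_of_Icc pi_pos.le) hy.eq_add_integral

theorem absolutelyContinuousOnInterval_deriv (hq : IntegrableOn q (Icc 0 π))
    (hy : IsSol q lam y y') : AbsolutelyContinuousOnInterval y' 0 π :=
  absolutelyContinuousOnInterval_of_eqOn_integral pi_pos.le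
    (hy.intervalIntegrable_potential_mul hq) hy.2.2

theorem ae_hasDerivAt_deriv (hq : IntegrableOn q (Icc 0 π)) (hy : IsSol q lam y y') :
    ∀ᵐ x, x ∈ Ioo 0 π → HasDerivAt y' ((q x - lam) * y x) x :=
  ae_hasDerivAt_of_eqOn_integral pi_pos.le (hy.intervalIntegrable_potential_mul hq) hy.2.2

theorem wronskian_sub_wronskian {ψ ψ' φ φ' : ℝ → ℝ} {mu : ℝ} (hq : IntegrableOn q (Icc 0 π))
    (hψ : IsSol q lam ψ ψ') (hφ : IsSol q mu φ φ') :
    (ψ π * φ' π - φ π * ψ' π) - (ψ 0 * φ' 0 - φ 0 * ψ' 0)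
      = (lam - mu) * ∫ x in (0:ℝ)..π, ψ x * φ x := by
  have hW : AbsolutelyContinuousOnInterval (fun x => ψ x * φ' x - φ x * ψ' x) 0 π :=
    (hψ.absolutelyContinuousOnInterval.fun_mul (hφ.absolutelyContinuousOnInterval_deriv hq)).sub
      (hφ.absolutelyContinuousOnInterval.fun_mul (hψ.absolutelyContinuousOnInterval_deriv hq))
  rw [← hW.integral_deriv_eq_sub, ← intervalIntegral.integral_const_mul]
  refine integral_congr_ae ?_
  filter_upwards [hψ.ae_hasDerivAt_deriv hq, hφ.ae_hasDerivAt_deriv hq, Measure.ae_ne volume π]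
    with x hψ'' hφ'' hxπ hx
  rw [uIoc_of_le pi_pos.le] at hx
  have hx' : x ∈ Ioo 0 π := ⟨hx.1, lt_of_le_of_ne hx.2 hxπ⟩
  have hxIcc := Ioo_subset_Icc_self hx'
  rw [(((hψ.2.1 x hxIcc).fun_mul (hφ'' hx')).fun_sub ((hφ.2.1 x hxIcc).fun_mul (hψ'' hx'))).deriv]
  ring

end IsSol

theorem stmt_0
    (q : ℝ → ℝ) (hq_meas : Measurable q)
    (hq_L2 : IntegrableOn (fun t => (q t) ^ 2) (Set.Icc 0 π))
    (h H H₁ H₂ : ℝ) (ρ : ℝ) (hρ : ρ = H * H₁ - H₂)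
    (lam lamn kn : ℝ) (hkn : kn ≠ 0)
    (ψ ψ' : ℝ → ℝ) (hψ : IsSol q lam ψ ψ')
    (hψπ : ψ π = -lam + H₁) (hψ'π : ψ' π = lam * H - H₂)
    (φ φ' : ℝ → ℝ) (hφ : IsSol q lamn φ φ')
    (hφ0 : φ 0 = 1) (hφ'0 : φ' 0 = h)
    (hφπ : kn * φ π = -lamn + H₁) (hφ'π : kn * φ' π = lamn * H - H₂) :
    ψ' 0 - h * ψ 0 = (lam - lamn) * ((∫ x in (0:ℝ)..π, ψ x * φ x) + ρ / kn) := by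
  have hq : IntegrableOn q (Icc 0 π) :=
    ((memLp_two_iff_integrable_sq hq_meas.aestronglyMeasurable).2 hq_L2).integrable one_le_two
  have hgreen := hψ.wronskian_sub_wronskian hq hφ
  have hboundary : ψ π * φ' π - φ π * ψ' π = -(lam - lamn) * ρ / kn := by
    rw [eq_div_iff hkn]
    linear_combination ψ π * hφ'π - ψ' π * hφπ + (lamn * H - H₂) * hψπ
      - (-lamn + H₁) * hψ'π + (lam - lamn) * hρ
  rw [hφ0, hφ'0, hboundary] at hgreen
  linear_combination hgreen
end

section
/- Let a < b be real numbers, let A : [a,b]×[a,b]×ℝ → ℝ and f : [a,b]×ℝ → ℝ be continuous, and let α₀ ∈ ℝ. Assume that the only continuous function z : [a,b] → ℝ satisfying z(t) + ∫ₐᵇ A(t,τ,α₀)·z(τ) dτ = 0 for all t ∈ [a,b] is z ≡ 0. Then there exist ε > 0 and a function y : [a,b]×(α₀−ε, α₀+ε) → ℝ, continuous in (t,α), such that for every α with |α − α₀| < ε, the function t ↦ y(t,α) is the unique continuous solution of the integral equation y(t,α) + ∫ₐᵇ A(t,τ,α)·y(τ,α) dτ = f(t,α) for all t ∈ [a,b].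 -/
/-!
On `C([a,b], ℝ)` the integral operator with a continuous kernel is compact (Arzelà–Ascoli), and it
depends continuously, in operator norm, on the kernel. By the Fredholm alternative, uniqueness at
`α₀` makes `1 + T_{α₀}` invertible; invertible operators form an open set on which inversion is
continuous, so `α ↦ (1 + T_α)⁻¹ f_α` is the continuous family of unique solutions near `α₀`.
-/

open MeasureTheory Set Topology

theorem IsCompactOperator.isUnit_one_add_of_injective {𝕜 E : Type*} [NontriviallyNormedField 𝕜]
    [NormedAddCommGroup E] [NormedSpace 𝕜 E] [CompleteSpace E] {K : E →L[𝕜] E}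
    (hK : IsCompactOperator K) (hinj : Function.Injective ⇑(1 + K)) : IsUnit (1 + K) := by
  rcases hK.hasEigenvalue_or_mem_resolventSet (neg_ne_zero.2 (one_ne_zero (α := 𝕜))) with
    heig | hres
  · obtain ⟨v, hv⟩ := heig.exists_hasEigenvector
    refine absurd (hinj (a₂ := 0) ?_) hv.2
    have hKv : K v = -v := by simpa using hv.apply_eq_smul
    simp [hKv]
  · rw [spectrum.mem_resolventSet_iff, ← IsUnit.neg_iff] at hres
    convert hres using 1
    simp [add_comm]

theorem exists_continuousOn_unique_solution_of_isUnit {𝕜 P E : Type*}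
    [NontriviallyNormedField 𝕜] [NormedAddCommGroup E] [NormedSpace 𝕜 E] [CompleteSpace E]
    [TopologicalSpace P] {G : P → E →L[𝕜] E} (hG : Continuous G) {g : P → E}
    (hg : Continuous g) {p₀ : P} (h₀ : IsUnit (G p₀)) :
    ∃ U ∈ 𝓝 p₀, ∃ y : P → E, ContinuousOn y U ∧ ∀ p ∈ U, ∀ x, G p x = g p ↔ x = y p := by
  refine ⟨{p | IsUnit (G p)}, (Units.isOpen.preimage hG).mem_nhds h₀,
    fun p => Ring.inverse (G p) (g p), fun p hp => ?_, fun p hp x => ?_⟩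
  · have hinv : ContinuousAt Ring.inverse (G p) :=
      hp.unit_spec ▸ NormedRing.inverse_continuousAt _
    exact ((hinv.comp hG.continuousAt).clm_apply hg.continuousAt).continuousWithinAt
  · obtain ⟨u, hu⟩ := hp
    simp only [← hu, Ring.inverse_unit]
    constructor
    · rintro h
      rw [← h, ← mul_apply_eq_comp, Units.inv_mul, one_apply_eq_self]
    · rintro rfl
      rw [← mul_apply_eq_comp, Units.mul_inv, one_apply_eq_self]

namespace ContinuousMap

theorem norm_curry_apply_le {X Y Z : Type*} [TopologicalSpace X] [TopologicalSpace Y]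
    [CompactSpace Y] [CompactSpace (X × Y)] [SeminormedAddCommGroup Z] (k : C(X × Y, Z))
    (x : X) : ‖k.curry x‖ ≤ ‖k‖ :=
  (ContinuousMap.norm_le _ (norm_nonneg k)).2 fun y => k.norm_coe_le_norm (x, y)

variable {X : Type*} [TopologicalSpace X] [CompactSpace X] [MeasurableSpace X]
  [OpensMeasurableSpace X] (μ : Measure X) [IsFiniteMeasure μ]

theorem integrable (g : C(X, ℝ)) : Integrable g μ :=
  (BoundedContinuousFunction.mkOfCompact g).integrable μ

theorem norm_integral_le_mul_norm (g : C(X, ℝ)) : ‖∫ x, g x ∂μ‖ ≤ μ.real univ * ‖g‖ :=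
  (BoundedContinuousFunction.mkOfCompact g).norm_integral_le_mul_norm μ

noncomputable def integralCLM : C(X, ℝ) →L[ℝ] ℝ :=
  LinearMap.mkContinuous
    { toFun := fun g => ∫ x, g x ∂μ
      map_add' := fun g h => integral_add (g.integrable μ) (h.integrable μ)
      map_smul' := fun c g => integral_smul c g }
    (μ.real univ) (norm_integral_le_mul_norm μ)

noncomputable def integralOperatorFun (k : C(X × X, ℝ)) (z : C(X, ℝ)) : C(X, ℝ) where
  toFun x := integralCLM μ (k.curry x * z)
  continuous_toFun :=
    (integralCLM μ).continuous.comp ((continuous_mul_const z).comp k.curry.continuous)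

theorem norm_integralOperatorFun_le (k : C(X × X, ℝ)) (z : C(X, ℝ)) :
    ‖integralOperatorFun μ k z‖ ≤ μ.real univ * ‖k‖ * ‖z‖ := by
  refine (ContinuousMap.norm_le _ (by positivity)).2 fun x => ?_
  calc ‖integralCLM μ (k.curry x * z)‖ ≤ μ.real univ * ‖k.curry x * z‖ :=
        norm_integral_le_mul_norm μ _
    _ ≤ μ.real univ * (‖k‖ * ‖z‖) := by
        gcongr
        exact (norm_mul_le _ _).trans (by gcongr; exact norm_curry_apply_le k x)
    _ = μ.real univ * ‖k‖ * ‖z‖ := by ring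

noncomputable def integralOperator : C(X × X, ℝ) →L[ℝ] C(X, ℝ) →L[ℝ] C(X, ℝ) :=
  LinearMap.mkContinuous₂
    (LinearMap.mk₂ ℝ (integralOperatorFun μ)
      (fun k k' z => by
        ext x
        simp only [integralOperatorFun, coe_mk, add_apply, ← map_add]
        congr 1; ext y; simp [add_mul])
      (fun c k z => by
        ext x
        simp only [integralOperatorFun, coe_mk, smul_apply, ← map_smul]
        congr 1; ext y; simp)
      (fun k z z' => by
        ext x
        simp only [integralOperatorFun, coe_mk, add_apply, ← map_add]
        congr 1; ext y; simp [mul_add])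
      (fun c k z => by
        ext x
        simp only [integralOperatorFun, coe_mk, smul_apply, ← map_smul]
        congr 1; ext y; simp))
    (μ.real univ) (norm_integralOperatorFun_le μ)

theorem integralOperator_apply (k : C(X × X, ℝ)) (z : C(X, ℝ)) (x : X) :
    integralOperator μ k z x = ∫ y, k (x, y) * z y ∂μ := rfl

theorem dist_integralOperator_apply_le (k : C(X × X, ℝ)) (z : C(X, ℝ)) (x x' : X) :
    dist (integralOperator μ k z x) (integralOperator μ k z x') ≤
      μ.real univ * ‖z‖ * dist (k.curry x) (k.curry x') := by
  have hsub : integralOperator μ k z x - integralOperator μ k z x' =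
      integralCLM μ ((k.curry x - k.curry x') * z) := by
    rw [sub_mul, map_sub]; rfl
  rw [dist_eq_norm, hsub, dist_eq_norm]
  calc _ ≤ μ.real univ * ‖(k.curry x - k.curry x') * z‖ := norm_integral_le_mul_norm μ _
    _ ≤ μ.real univ * (‖k.curry x - k.curry x'‖ * ‖z‖) := by gcongr; exact norm_mul_le _ _
    _ = _ := by ring

theorem isCompactOperator_integralOperator (k : C(X × X, ℝ)) :
    IsCompactOperator (integralOperator μ k) := by
  set T := integralOperator μ k
  set B : Set C(X, ℝ) := Metric.closedBall 0 1
  set e := (ContinuousMap.isometryEquivBoundedOfCompact X ℝ).toHomeomorph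
  have hbound : ∀ z ∈ B, ∀ x, T z x ∈ Metric.closedBall (0 : ℝ) (μ.real univ * ‖k‖) := by
    intro z hz x
    rw [mem_closedBall_zero_iff] at hz ⊢
    calc ‖T z x‖ ≤ ‖T z‖ := (T z).norm_coe_le_norm x
      _ ≤ μ.real univ * ‖k‖ * ‖z‖ := norm_integralOperatorFun_le μ k z
      _ ≤ μ.real univ * ‖k‖ := mul_le_of_le_one_right (by positivity) hz
  have hequi : Equicontinuous ((↑) : e '' (T '' B) → X → ℝ) := by
    refine fun x₀ => Metric.equicontinuousAt_iff_right.2 fun ε hε => ?_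
    have hδ : 0 < ε / (μ.real univ + 1) := by positivity
    filter_upwards [Metric.tendsto_nhds.1 (k.curry.continuous.tendsto x₀) _ hδ] with x hx
    rintro ⟨_, z, ⟨z, hz, rfl⟩, rfl⟩
    rw [mem_closedBall_zero_iff] at hz
    have hμ : 0 ≤ μ.real univ := measureReal_nonneg
    calc dist (T z x₀) (T z x)
        ≤ μ.real univ * ‖z‖ * dist (k.curry x₀) (k.curry x) :=
          dist_integralOperator_apply_le μ k z x₀ x
      _ ≤ (μ.real univ + 1) * dist (k.curry x₀) (k.curry x) := by
          gcongr; nlinarith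
      _ < (μ.real univ + 1) * (ε / (μ.real univ + 1)) := by
          gcongr; rwa [dist_comm]
      _ = ε := by field_simp
  refine (isCompactOperator_iff_exists_mem_nhds_isCompact_closure_image _).2
    ⟨B, Metric.closedBall_mem_nhds 0 one_pos, ?_⟩
  rw [← e.isCompact_image, e.image_closure]
  exact BoundedContinuousFunction.arzela_ascoli _ (isCompact_closedBall 0 _) _
    (by rintro _ x ⟨_, ⟨z, hz, rfl⟩, rfl⟩; exact hbound z hz x) hequi

end ContinuousMap

open ContinuousMap

noncomputable abbrev volumeIcc (a b : ℝ) : Measure (Icc a b) :=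
  (volume.restrict (Icc a b)).comap Subtype.val

section Interval

variable {a b : ℝ}

theorem integral_volumeIcc_eq_intervalIntegral (hab : a ≤ b) (g : ℝ → ℝ) :
    ∫ τ, g τ ∂volumeIcc a b = ∫ τ in a..b, g τ := by
  rw [integral_subtype_comap measurableSet_Icc, Measure.restrict_restrict measurableSet_Icc,
    inter_self, integral_Icc_eq_integral_Ioc, intervalIntegral.integral_of_le hab]

theorem exists_continuous_kernel_family_of_continuousOn {A : ℝ → ℝ → ℝ → ℝ}
    (hA : ContinuousOn (fun p : ℝ × ℝ × ℝ => A p.1 p.2.1 p.2.2) (Icc a b ×ˢ Icc a b ×ˢ univ)) :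
    ∃ k : ℝ → C(Icc a b × Icc a b, ℝ), Continuous k ∧ ∀ α (t τ : Icc a b), k α (t, τ) = A t τ α :=
  ⟨ContinuousMap.curry ⟨fun p : ℝ × (Icc a b × Icc a b) => A p.2.1 p.2.2 p.1,
      hA.comp_continuous
        (f := fun p : ℝ × (Icc a b × Icc a b) => ((p.2.1 : ℝ), (p.2.2 : ℝ), p.1))
        (by fun_prop) fun p => ⟨p.2.1.2, p.2.2.2, trivial⟩⟩,
    map_continuous _, fun _ _ _ => rfl⟩

theorem exists_continuous_family_of_continuousOn {f : ℝ → ℝ → ℝ}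
    (hf : ContinuousOn (fun p : ℝ × ℝ => f p.1 p.2) (Icc a b ×ˢ univ)) :
    ∃ g : ℝ → C(Icc a b, ℝ), Continuous g ∧ ∀ α (t : Icc a b), g α t = f t α :=
  ⟨ContinuousMap.curry ⟨fun p : ℝ × Icc a b => f p.2 p.1,
      hf.comp_continuous (f := fun p : ℝ × Icc a b => ((p.2 : ℝ), p.1)) (by fun_prop)
        fun p => ⟨p.2.2, trivial⟩⟩,
    map_continuous _, fun _ _ => rfl⟩

theorem one_add_integralOperator_apply_eq_iff (hab : a ≤ b) {K : ℝ → ℝ → ℝ}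
    {k : C(Icc a b × Icc a b, ℝ)} (hk : ∀ t τ : Icc a b, k (t, τ) = K t τ)
    {z g : C(Icc a b, ℝ)} {φ γ : ℝ → ℝ} (hφ : ∀ τ : Icc a b, φ τ = z τ)
    (hγ : ∀ t : Icc a b, γ t = g t) :
    (1 + integralOperator (volumeIcc a b) k) z = g ↔
      ∀ t ∈ Icc a b, φ t + ∫ τ in a..b, K t τ * φ τ = γ t := by
  have hT : ∀ t : Icc a b,
      integralOperator (volumeIcc a b) k z t = ∫ τ in a..b, K t τ * φ τ := by
    intro t
    rw [integralOperator_apply, ← integral_volumeIcc_eq_intervalIntegral hab]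
    simp only [hk, hφ]
  simp only [ContinuousMap.ext_iff, _root_.add_apply, one_apply_eq_self, ContinuousMap.add_apply,
    hT, ← hφ, ← hγ, Subtype.forall]

theorem injective_one_add_integralOperator (hab : a ≤ b) {K : ℝ → ℝ → ℝ}
    {k : C(Icc a b × Icc a b, ℝ)} (hk : ∀ t τ : Icc a b, k (t, τ) = K t τ)
    (huniq : ∀ z : ℝ → ℝ, ContinuousOn z (Icc a b) →
      (∀ t ∈ Icc a b, z t + ∫ τ in a..b, K t τ * z τ = 0) → ∀ t ∈ Icc a b, z t = 0) :
    Function.Injective ⇑(1 + integralOperator (volumeIcc a b) k) := by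
  refine (injective_iff_map_eq_zero _).2 fun z hz => ?_
  have hzero := huniq (Set.IccExtend hab z)
    (continuous_IccExtend_iff.2 z.continuous).continuousOn
    ((one_add_integralOperator_apply_eq_iff hab hk (IccExtend_val hab z) (γ := 0)
      (fun _ => rfl)).1 hz)
  ext t
  simpa using hzero t t.2

end Interval

theorem stmt_8
    (a b : ℝ) (hab : a < b)
    (A : ℝ → ℝ → ℝ → ℝ) (f : ℝ → ℝ → ℝ) (α₀ : ℝ)
    (hA : ContinuousOn (fun p : ℝ × ℝ × ℝ => A p.1 p.2.1 p.2.2)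
      (Set.Icc a b ×ˢ Set.Icc a b ×ˢ (Set.univ : Set ℝ)))
    (hf : ContinuousOn (fun p : ℝ × ℝ => f p.1 p.2)
      (Set.Icc a b ×ˢ (Set.univ : Set ℝ)))
    (huniq : ∀ z : ℝ → ℝ, ContinuousOn z (Set.Icc a b) →
      (∀ t ∈ Set.Icc a b, z t + ∫ τ in a..b, A t τ α₀ * z τ = 0) →
      ∀ t ∈ Set.Icc a b, z t = 0) :
    ∃ ε > 0, ∃ y : ℝ → ℝ → ℝ,
      ContinuousOn (fun p : ℝ × ℝ => y p.1 p.2)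
        (Set.Icc a b ×ˢ Set.Ioo (α₀ - ε) (α₀ + ε)) ∧
      ∀ α : ℝ, |α - α₀| < ε →
        (∀ t ∈ Set.Icc a b, y t α + (∫ τ in a..b, A t τ α * y τ α) = f t α) ∧
        ∀ z : ℝ → ℝ, ContinuousOn z (Set.Icc a b) →
          (∀ t ∈ Set.Icc a b, z t + (∫ τ in a..b, A t τ α * z τ) = f t α) →
          ∀ t ∈ Set.Icc a b, z t = y t α := by
  obtain ⟨k, hk_cont, hk⟩ := exists_continuous_kernel_family_of_continuousOn hA
  obtain ⟨g, hg_cont, hg⟩ := exists_continuous_family_of_continuousOn hf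
  have hunit : IsUnit (1 + integralOperator (volumeIcc a b) (k α₀)) :=
    (isCompactOperator_integralOperator _ _).isUnit_one_add_of_injective
      (injective_one_add_integralOperator hab.le (hk α₀) huniq)
  have hG : Continuous fun α => 1 + integralOperator (volumeIcc a b) (k α) :=
    continuous_const.add ((integralOperator _).continuous.comp hk_cont)
  obtain ⟨U, hU, y, hy_cont, hy⟩ :=
    exists_continuousOn_unique_solution_of_isUnit hG hg_cont hunit
  obtain ⟨ε, hε, hball⟩ := Metric.mem_nhds_iff.1 hU
  refine ⟨ε, hε, fun t α => Set.IccExtend hab.le (y α) t, ?_, fun α hα => ?_⟩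
  · rw [← Real.ball_eq_Ioo]
    exact continuous_eval.comp_continuousOn
      (((hy_cont.mono hball).comp continuousOn_snd fun _ hp => hp.2).prodMk
        ((continuous_projIcc (h := hab.le)).comp continuous_fst).continuousOn)
  have hαU : α ∈ U := hball (by rwa [Metric.mem_ball, Real.dist_eq])
  refine ⟨(one_add_integralOperator_apply_eq_iff hab.le (hk α) (IccExtend_val hab.le (y α))
    (fun t => (hg α t).symm)).1 ((hy α hαU _).2 rfl), fun z hzc hz t ht => ?_⟩
  have hzy := (hy α hαU ⟨(Icc a b).domRestrict z, hzc.domRestrict⟩).1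
    ((one_add_integralOperator_apply_eq_iff hab.le (hk α) (fun _ => rfl)
      (fun t => (hg α t).symm)).2 hz)
  calc z t = y α ⟨t, ht⟩ := by rw [← hzy]; rfl
    _ = Set.IccExtend hab.le (y α) t := (IccExtend_of_mem hab.le _ ht).symm
end

section
/- Let λ : ℕ → ℝ be injective, let ρ ∈ ℝ with ρ ≠ 0, and let A, B : ℕ → ℝ satisfy Aₙ·Bₘ − Bₙ·Aₘ = ρ·(λₘ − λₙ) for all m ≠ n. Then there exist real constants κ₁, κ₂, κ₃, κ₄ such that Aₙ = κ₁·λₙ + κ₂ and Bₙ = κ₃·λₙ + κ₄ for every n, and κ₁·κ₄ − κ₂·κ₃ = −ρ. -/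
/-! Read the relation as `det ((A i, B i), (A n, B n)) = ρ (λ n - λ i)`. Writing `(A n, B n)` in the
basis `(A 0, B 0), (A 1, B 1)` (whose determinant `ρ (λ 1 - λ 0)` is nonzero) by Cramer's rule,
both coordinates are affine in `λ n`, so `A` and `B` are affine functions of `λ`. The determinant
of their coefficients is then `det ((A 0, B 0), (A 1, B 1)) / (λ 0 - λ 1) = -ρ`. -/

section

variable {ι : Type*} {lam A B : ι → ℝ} {ρ : ℝ}

noncomputable def secantSlope (lam f : ι → ℝ) (i j : ι) : ℝ := (f j - f i) / (lam j - lam i)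

theorem cross_rel_of_ne (hrel : ∀ m n, m ≠ n → A n * B m - B n * A m = ρ * (lam m - lam n))
    (m n : ι) : A n * B m - B n * A m = ρ * (lam m - lam n) := by
  rcases eq_or_ne m n with rfl | hmn
  · ring
  · exact hrel m n hmn

theorem cross_rel_swap (hrel : ∀ m n, A n * B m - B n * A m = ρ * (lam m - lam n)) (m n : ι) :
    B n * A m - A n * B m = -ρ * (lam m - lam n) := by
  linear_combination -hrel m n

theorem eq_secantSlope_mul_add (hρ : ρ ≠ 0)
    (hrel : ∀ m n, A n * B m - B n * A m = ρ * (lam m - lam n)) {i j : ι} (hij : lam i ≠ lam j)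
    (n : ι) :
    A n = secantSlope lam A i j * lam n + (A i - secantSlope lam A i j * lam i) := by
  have hd : lam j - lam i ≠ 0 := sub_ne_zero.mpr hij.symm
  have cramer :
      ρ * ((lam j - lam i) * A n) = ρ * ((lam j - lam n) * A i + (lam n - lam i) * A j) := by
    linear_combination A i * hrel j n - A j * hrel i n - A n * hrel j i
  have interpolate := mul_left_cancel₀ hρ cramer
  rw [secantSlope]
  field_simp
  linear_combination interpolate

theorem secantSlope_cross (hrel : ∀ m n, A n * B m - B n * A m = ρ * (lam m - lam n)) {i j : ι}
    (hij : lam i ≠ lam j) :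
    secantSlope lam A i j * B i - A i * secantSlope lam B i j = -ρ := by
  have hd : lam j - lam i ≠ 0 := sub_ne_zero.mpr hij.symm
  rw [secantSlope, secantSlope]
  field_simp
  linear_combination -hrel j i

end

theorem stmt_12
    (lam : ℕ → ℝ) (hlam : Function.Injective lam)
    (ρ : ℝ) (hρ : ρ ≠ 0)
    (A B : ℕ → ℝ)
    (hrel : ∀ m n : ℕ, m ≠ n → A n * B m - B n * A m = ρ * (lam m - lam n)) :
    ∃ κ₁ κ₂ κ₃ κ₄ : ℝ,
      (∀ n : ℕ, A n = κ₁ * lam n + κ₂) ∧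
      (∀ n : ℕ, B n = κ₃ * lam n + κ₄) ∧
      κ₁ * κ₄ - κ₂ * κ₃ = -ρ := by
  have hrel' := cross_rel_of_ne hrel
  have h01 : lam 0 ≠ lam 1 := hlam.ne zero_ne_one
  refine ⟨secantSlope lam A 0 1, A 0 - secantSlope lam A 0 1 * lam 0,
    secantSlope lam B 0 1, B 0 - secantSlope lam B 0 1 * lam 0,
    eq_secantSlope_mul_add hρ hrel' h01,
    eq_secantSlope_mul_add (neg_ne_zero.mpr hρ) (cross_rel_swap hrel') h01, ?_⟩
  linear_combination secantSlope_cross hrel' h01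
end

section
/- Let q : ℝ → ℝ be measurable with ∫₀^π q(t)² dt < ∞, let h, h̃, H, H₁, H₂ ∈ ℝ and set ρ := H·H₁ − H₂. Let λ, μ ∈ ℝ with λ ≠ μ, λ ≠ H₁ and μ ≠ H₁, and let a, b ∈ ℝ. Suppose u is a solution of −y'' + q y = λ y on [0,π] with u(0) = 1 + a, u'(0) = h̃ + a·h, and λ·(u'(π) + H·u(π)) = H₁·u'(π) + H₂·u(π), and v is a solution of −y'' + q y = μ y on [0,π] with v(0) = 1 + b, v'(0) = h̃ + b·h, and μ·(v'(π) + H·v(π)) = H₁·v'(π) + H₂·v(π). Then ∫₀^π u(x)·v(x) dx = −ρ·u(π)·v(π)/((H₁ − λ)·(H₁ − μ)) + (h − h̃)·(a − b)/(λ − μ). -/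
open Real MeasureTheory Set intervalIntegral

section
variable {a b : ℝ} {f f' g : ℝ → ℝ}

theorem absolutelyContinuousOnInterval_of_eq_add_integral (hg : IntervalIntegrable g volume a b)
    (hf : ∀ x ∈ uIcc a b, f x = f a + ∫ t in a..x, g t) :
    AbsolutelyContinuousOnInterval f a b :=
  ((LipschitzWith.const (f a)).lipschitzOnWith.absolutelyContinuousOnInterval.add
    (hg.absolutelyContinuousOnInterval_intervalIntegral left_mem_uIcc)).congr
    fun x hx => (hf x hx).symm

theorem ae_hasDerivAt_of_eq_add_integral (hg : IntervalIntegrable g volume a b)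
    (hf : ∀ x ∈ uIcc a b, f x = f a + ∫ t in a..x, g t) :
    ∀ᵐ x, x ∈ Ioo (min a b) (max a b) → HasDerivAt f (g x) x := by
  filter_upwards [hg.ae_hasDerivAt_integral] with x hx hxab
  have hmem : x ∈ uIcc a b := Ioo_subset_Icc_self hxab
  refine ((hx hmem a left_mem_uIcc).const_add (f a)).congr_of_eventuallyEq ?_
  filter_upwards [isOpen_Ioo.mem_nhds hxab] with y hy using hf y (Ioo_subset_Icc_self hy)

theorem absolutelyContinuousOnInterval_of_hasDerivAt (hf : ∀ x ∈ uIcc a b, HasDerivAt f (f' x) x)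
    (hf' : ContinuousOn f' (uIcc a b)) : AbsolutelyContinuousOnInterval f a b := by
  obtain ⟨C, hC⟩ := isCompact_uIcc.exists_bound_of_continuousOn hf'
  refine LipschitzOnWith.absolutelyContinuousOnInterval (K := C.toNNReal) <|
    (convex_uIcc a b).lipschitzOnWith_of_nnnorm_hasDerivWithin_le
      (fun x hx => (hf x hx).hasDerivWithinAt) fun x hx => ?_
  rw [← NNReal.coe_le_coe, coe_nnnorm]
  exact (hC x hx).trans (le_coe_toNNReal C)

def wronskian (u u' v v' : ℝ → ℝ) (x : ℝ) : ℝ := u x * v' x - u' x * v x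

theorem integral_mul_sub_mul_eq_wronskian_sub {u u' v v' f g : ℝ → ℝ}
    (hu : ∀ x ∈ uIcc a b, HasDerivAt u (u' x) x) (hv : ∀ x ∈ uIcc a b, HasDerivAt v (v' x) x)
    (hf : IntervalIntegrable f volume a b) (hg : IntervalIntegrable g volume a b)
    (hu' : ∀ x ∈ uIcc a b, u' x = u' a + ∫ t in a..x, f t)
    (hv' : ∀ x ∈ uIcc a b, v' x = v' a + ∫ t in a..x, g t) :
    ∫ x in a..b, (u x * g x - f x * v x) = wronskian u u' v v' b - wronskian u u' v v' a := by
  have hu'AC := absolutelyContinuousOnInterval_of_eq_add_integral hf hu'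
  have hv'AC := absolutelyContinuousOnInterval_of_eq_add_integral hg hv'
  have huAC := absolutelyContinuousOnInterval_of_hasDerivAt hu hu'AC.continuousOn
  have hvAC := absolutelyContinuousOnInterval_of_hasDerivAt hv hv'AC.continuousOn
  rw [wronskian, wronskian,
    ← ((huAC.fun_mul hv'AC).fun_sub (hu'AC.fun_mul hvAC)).integral_deriv_eq_sub]
  refine integral_congr_ae ?_
  filter_upwards [ae_hasDerivAt_of_eq_add_integral hf hu', ae_hasDerivAt_of_eq_add_integral hg hv',
    (countable_singleton (max a b)).ae_notMem volume] with x hu'x hv'x hxb hx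
  have hx' : x ∈ Ioo (min a b) (max a b) := ⟨hx.1, lt_of_le_of_ne hx.2 hxb⟩
  have hmem : x ∈ uIcc a b := Ioo_subset_Icc_self hx'
  rw [(((hu x hmem).fun_mul (hv'x hx')).fun_sub ((hu'x hx').fun_mul (hv x hmem))).deriv]
  ring

end

namespace IsSol

variable {q u u' : ℝ → ℝ} {lam : ℝ}

theorem intervalIntegrable_sub_mul (hq : IntegrableOn q (Icc 0 π)) (hu : IsSol q lam u u') :
    IntervalIntegrable (fun t => (q t - lam) * u t) volume 0 π := by
  rw [intervalIntegrable_iff_integrableOn_Icc_of_le pi_pos.le]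
  exact (hq.sub (integrableOn_const measure_Icc_lt_top.ne)).mul_continuousOn
    (fun x hx => (hu.2.1 x hx).continuousAt.continuousWithinAt) isCompact_Icc

theorem sub_mul_integral_mul_eq_wronskian_sub {v v' : ℝ → ℝ} {μ : ℝ} (hq : IntegrableOn q (Icc 0 π))
    (hu : IsSol q lam u u') (hv : IsSol q μ v v') :
    (lam - μ) * ∫ x in (0:ℝ)..π, u x * v x = wronskian u u' v v' π - wronskian u u' v v' 0 := by
  have hIcc : uIcc 0 π = Icc 0 π := uIcc_of_le pi_pos.le
  rw [← intervalIntegral.integral_const_mul,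
    ← integral_mul_sub_mul_eq_wronskian_sub (hIcc ▸ hu.2.1) (hIcc ▸ hv.2.1)
      (hu.intervalIntegrable_sub_mul hq) (hv.intervalIntegrable_sub_mul hq)
      (hIcc ▸ hu.2.2) (hIcc ▸ hv.2.2)]
  congr 1 with x
  ring

end IsSol

theorem stmt_14
    (q : ℝ → ℝ) (hq_meas : Measurable q)
    (hq_L2 : IntegrableOn (fun t => (q t) ^ 2) (Set.Icc 0 π))
    (h ht H H₁ H₂ : ℝ) (ρ : ℝ) (hρ : ρ = H * H₁ - H₂)
    (lam μ : ℝ) (hlamμ : lam ≠ μ) (hlamH₁ : lam ≠ H₁) (hμH₁ : μ ≠ H₁)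
    (a b : ℝ)
    (u u' : ℝ → ℝ) (hu : IsSol q lam u u')
    (hu0 : u 0 = 1 + a) (hu'0 : u' 0 = ht + a * h)
    (hubc : lam * (u' π + H * u π) = H₁ * u' π + H₂ * u π)
    (v v' : ℝ → ℝ) (hv : IsSol q μ v v')
    (hv0 : v 0 = 1 + b) (hv'0 : v' 0 = ht + b * h)
    (hvbc : μ * (v' π + H * v π) = H₁ * v' π + H₂ * v π) :
    (∫ x in (0:ℝ)..π, u x * v x) =
      -ρ * u π * v π / ((H₁ - lam) * (H₁ - μ)) + (h - ht) * (a - b) / (lam - μ) := by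
  have hq : IntegrableOn q (Icc 0 π) :=
    ((memLp_two_iff_integrable_sq hq_meas.aestronglyMeasurable).2 hq_L2).integrable one_le_two
  have key := hu.sub_mul_integral_mul_eq_wronskian_sub hq hv
  simp only [wronskian, hu0, hu'0, hv0, hv'0] at key
  have h1 : H₁ - lam ≠ 0 := sub_ne_zero.2 hlamH₁.symm
  have h2 : H₁ - μ ≠ 0 := sub_ne_zero.2 hμH₁.symm
  have h3 : lam - μ ≠ 0 := sub_ne_zero.2 hlamμ
  rw [hρ, div_add_div _ _ (mul_ne_zero h1 h2) h3, eq_div_iff (mul_ne_zero (mul_ne_zero h1 h2) h3)]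
  have hupi : (lam - H₁) * u' π = (H₂ - lam * H) * u π := by linear_combination hubc
  have hvpi : (μ - H₁) * v' π = (H₂ - μ * H) * v π := by linear_combination hvbc
  linear_combination (H₁ - lam) * (H₁ - μ) * key - (H₁ - lam) * u π * hvpi + (H₁ - μ) * v π * hupi
end
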